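/- For every integer i ≥ 0, every real α > −1 and every real β > 0, ∫_0^∞ q^{β−1} e^{−q} L_i^α(q) dq = (−1)^i · (1+α−β)(2+α−β)⋯(i+α−β) · Γ(β), where the product (1+α−β)(2+α−β)⋯(i+α−β) is the Pochhammer rising factorial (1−β+α)_i (interpreted as 1 when i = 0). -/

import Mathlib

/-- The monic generalised Laguerre polynomial
`L_i^α(q) = ∑_{k=0}^i C(i,k)(−1)^{i−k}(Γ(i+α+1)/Γ(k+α+1)) q^k`. -/
noncomputable def laguerreL (i : ℕ) (α : ℝ) (q : ℝ) : ℝ :=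
  ∑ k ∈ Finset.range (i + 1),
    (i.choose k : ℝ) * (-1 : ℝ) ^ (i - k) *
      (Real.Gamma ((i : ℝ) + α + 1) / Real.Gamma ((k : ℝ) + α + 1)) * q ^ k

/-!
Integrating termwise, `q ^ (β - 1) * exp (-q) * q ^ k` contributes `Γ(β + k)`, and the signs
`(-1) ^ (i - k) * C(i, k)` make the moment `Γ(i + α + 1)` times the `i`-th forward difference at `0`
of `n ↦ Γ(β + n) / Γ(α + 1 + n)`. A single difference of `n ↦ Γ(b + n) / Γ(a + n)` is
`(b - a) • (n ↦ Γ(b + n) / Γ(a + 1 + n))`, so the `i`-th one is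
`(β - α - 1) ⋯ (β - α - i) • (n ↦ Γ(β + n) / Γ(α + 1 + i + n))`.
-/

open Finset MeasureTheory Real fwdDiff

noncomputable def gammaRatio (a b : ℝ) (n : ℕ) : ℝ := Gamma (b + n) / Gamma (a + n)

lemma fwdDiff_gammaRatio {a b : ℝ} (ha : 0 < a) (hb : 0 < b) :
    Δ_[1] (gammaRatio a b) = (b - a) • gammaRatio (a + 1) b := by
  funext n
  have han : a + n ≠ 0 := by positivity
  have hbn : b + n ≠ 0 := by positivity
  have hGa : Gamma (a + n) ≠ 0 := (Gamma_pos_of_pos (by positivity)).ne'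
  have hshift : ∀ c : ℝ, c + ((n + 1 : ℕ) : ℝ) = (c + n) + 1 := fun c => by push_cast; ring
  simp only [fwdDiff, gammaRatio, Pi.smul_apply, smul_eq_mul, hshift, add_right_comm a 1,
    Gamma_add_one han, Gamma_add_one hbn]
  field_simp
  ring

lemma fwdDiff_iter_gammaRatio {a b : ℝ} (ha : 0 < a) (hb : 0 < b) (n : ℕ) :
    Δ_[1] ^[n] (gammaRatio a b) = (∏ j ∈ range n, (b - a - j)) • gammaRatio (a + n) b := by
  induction n generalizing a with
  | zero => simp
  | succ n ih =>
    have hprod : ∏ j ∈ range (n + 1), (b - a - j) =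
        (b - a) * ∏ j ∈ range n, (b - (a + 1) - j) := by
      rw [prod_range_succ', mul_comm]
      congr 1
      · simp
      · exact prod_congr rfl fun j _ => by push_cast; ring
    have hshift : a + 1 + n = a + (n + 1 : ℕ) := by push_cast; ring
    rw [Function.iterate_succ_apply, fwdDiff_gammaRatio ha hb, fwdDiff_iter_const_smul,
      ih (by positivity), smul_smul, hprod, hshift]

lemma rpow_mul_exp_neg_mul_pow {β q : ℝ} (hq : 0 < q) (k : ℕ) :
    q ^ (β - 1) * exp (-q) * q ^ k = exp (-q) * q ^ (β + k - 1) := by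
  rw [add_sub_right_comm, rpow_add hq, rpow_natCast]
  ring

lemma integrableOn_rpow_mul_exp_neg_mul_pow {β : ℝ} (hβ : 0 < β) (k : ℕ) :
    IntegrableOn (fun q : ℝ => q ^ (β - 1) * exp (-q) * q ^ k) (Set.Ioi 0) :=
  (GammaIntegral_convergent (by positivity : 0 < β + k)).congr_fun
    (fun q hq => (rpow_mul_exp_neg_mul_pow hq k).symm) measurableSet_Ioi

lemma integral_rpow_mul_exp_neg_mul_pow {β : ℝ} (hβ : 0 < β) (k : ℕ) :
    ∫ q in Set.Ioi (0 : ℝ), q ^ (β - 1) * exp (-q) * q ^ k = Gamma (β + k) := by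
  rw [Gamma_eq_integral (by positivity)]
  exact setIntegral_congr_fun measurableSet_Ioi fun q hq => rpow_mul_exp_neg_mul_pow hq k

lemma integral_rpow_mul_exp_neg_mul_sum {β : ℝ} (hβ : 0 < β) (s : Finset ℕ) (c : ℕ → ℝ) :
    ∫ q in Set.Ioi (0 : ℝ), q ^ (β - 1) * exp (-q) * ∑ k ∈ s, c k * q ^ k =
      ∑ k ∈ s, c k * Gamma (β + k) := by
  calc _ = ∫ q in Set.Ioi (0 : ℝ), ∑ k ∈ s, c k * (q ^ (β - 1) * exp (-q) * q ^ k) := by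
        congr 1 with q
        rw [mul_sum]
        exact sum_congr rfl fun k _ => by ring
    _ = _ := by
        rw [integral_finsetSum _ fun k _ =>
          (integrableOn_rpow_mul_exp_neg_mul_pow hβ k).const_mul _]
        simp only [integral_const_mul, integral_rpow_mul_exp_neg_mul_pow hβ]

/-- For integer `i ≥ 0`, real `α > −1` and real `β > 0`,
`∫₀^∞ q^{β−1} e^{−q} L_i^α(q) dq = (−1)^i·(1−β+α)_i·Γ(β)`, where
`(1−β+α)_i = (1+α−β)(2+α−β)⋯(i+α−β)` is the rising factorial (equal to `1` for `i = 0`). -/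
theorem laguerre_moment_integral (i : ℕ) (α : ℝ) (hα : -1 < α) (β : ℝ) (hβ : 0 < β) :
    (∫ q in Set.Ioi (0 : ℝ), q ^ (β - 1) * Real.exp (-q) * laguerreL i α q) =
      (-1 : ℝ) ^ i * (∏ j ∈ Finset.range i, ((j : ℝ) + 1 + α - β)) * Real.Gamma β := by
  have hα' : 0 < α + 1 := by linarith
  have hGi : Gamma (i + α + 1) ≠ 0 := (Gamma_pos_of_pos (by linarith [i.cast_nonneg (α := ℝ)])).ne'
  calc _ = Gamma (i + α + 1) * Δ_[1] ^[i] (gammaRatio (α + 1) β) 0 := by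
        simp only [laguerreL]
        rw [integral_rpow_mul_exp_neg_mul_sum hβ, fwdDiff_iter_eq_sum_shift, mul_sum]
        refine sum_congr rfl fun k _ => ?_
        simp only [gammaRatio, zsmul_eq_mul, smul_eq_mul, zero_add, mul_one]
        push_cast
        ring_nf
    _ = _ := by
        rw [fwdDiff_iter_gammaRatio hα' hβ, Pi.smul_apply, smul_eq_mul, gammaRatio]
        have hsign : ∏ j ∈ range i, (β - (α + 1) - j) =
            (-1) ^ i * ∏ j ∈ range i, ((j : ℝ) + 1 + α - β) := by
          calc _ = ∏ j ∈ range i, -((j : ℝ) + 1 + α - β) := prod_congr rfl fun j _ => by ring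
            _ = _ := by rw [prod_neg, card_range]
        rw [hsign, Nat.cast_zero, add_zero, add_zero, add_right_comm α, add_comm α]
        field_simp
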